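/- (Theorem 1) Let 1 ≤ m ≤ n. Let A be an m×(n−1) binary matrix with guard bits a_{i,−1} = 1 and a_{i,n−1} = 0, and let B be an (m−1)×n binary matrix with guard bits b_{−1,j} = 1 and b_{m−1,j} = 0. Define Δa_{i,j} = a_{i,j−1} − a_{i,j} and Δb_{i,j} = b_{i−1,j} − b_{i,j} for 0 ≤ i ≤ m−1 and 0 ≤ j ≤ n−1, and set E_d^{mn}(A,B) = (1/2)·Σ_{i,j} (Δa_{i,j})^2 + (1/2)·Σ_{i,j} (Δb_{i,j})^2 + (1/2)·Σ_{i,j} (Δa_{i,j} − Δb_{i,j})^2. Then E_d^{mn}(A,B) ≥ n, and E_d^{mn}(A,B) = n if and only if A and B satisfy the row domain-wall condition, the column domain-wall condition, and the dual-permutation condition. -/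

import Mathlib

/-- Guard-extended row of the matrix `A` (rows of length `n-1`, guard bits
`a_{i,-1} = 1` at shifted index `0` and `a_{i,n-1} = 0` at shifted index `n`). -/
def gA (n : ℕ) (A : ℕ → ℕ → ℤ) (i j : ℕ) : ℤ :=
  if j = 0 then 1 else if j < n then A i (j - 1) else 0

/-- `Δa_{i,j} = a_{i,j-1} - a_{i,j}` computed on the guard-extended rows of `A`. -/
def dA (n : ℕ) (A : ℕ → ℕ → ℤ) (i j : ℕ) : ℤ := gA n A i j - gA n A i (j + 1)

/-- Guard-extended column of the matrix `B` (columns of length `m-1`, guard bits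
`b_{-1,j} = 1` at shifted index `0` and `b_{m-1,j} = 0` at shifted index `m`). -/
def gB (m : ℕ) (B : ℕ → ℕ → ℤ) (i j : ℕ) : ℤ :=
  if i = 0 then 1 else if i < m then B (i - 1) j else 0

/-- `Δb_{i,j} = b_{i-1,j} - b_{i,j}` computed on the guard-extended columns of `B`. -/
def dB (m : ℕ) (B : ℕ → ℕ → ℤ) (i j : ℕ) : ℤ := gB m B i j - gB m B (i + 1) j

/-- Row domain-wall condition: every guard-extended row of the `m × (n-1)` matrix `A`
is a domain-wall vector. -/
def RowDW (m n : ℕ) (A : ℕ → ℕ → ℤ) : Prop :=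
  ∀ i < m, ∃ t ≤ n - 1, ∀ j < n - 1, (j < t → A i j = 1) ∧ (t ≤ j → A i j = 0)

/-- Column domain-wall condition: every guard-extended column of the `(m-1) × n` matrix `B`
is a domain-wall vector. -/
def ColDW (m n : ℕ) (B : ℕ → ℕ → ℤ) : Prop :=
  ∀ j < n, ∃ t ≤ m - 1, ∀ i < m - 1, (i < t → B i j = 1) ∧ (t ≤ i → B i j = 0)

/-- The dual-matrix domain-wall QUBO energy
`E_dᵐⁿ(A,B) = ½ ΣΣ (Δa)² + ½ ΣΣ (Δb)² + ½ ΣΣ (Δa - Δb)²`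
over `0 ≤ i ≤ m-1` and `0 ≤ j ≤ n-1`. -/
def Ed (m n : ℕ) (A B : ℕ → ℕ → ℤ) : ℚ :=
  (1 / 2 : ℚ) * ∑ i ∈ Finset.range m, ∑ j ∈ Finset.range n, (dA n A i j : ℚ) ^ 2 +
  (1 / 2 : ℚ) * ∑ i ∈ Finset.range m, ∑ j ∈ Finset.range n, (dB m B i j : ℚ) ^ 2 +
  (1 / 2 : ℚ) * ∑ i ∈ Finset.range m, ∑ j ∈ Finset.range n,
    ((dA n A i j : ℚ) - (dB m B i j : ℚ)) ^ 2

/-- Dual-permutation condition: for all `i < m` and `j < n`, if `Δa_{i,j} = 1` then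
`Δb_{i,j} = 1`. -/
def DualPerm (m n : ℕ) (A B : ℕ → ℕ → ℤ) : Prop :=
  ∀ i < m, ∀ j < n, dA n A i j = 1 → dB m B i j = 1

/-! Each `Δa_{i,j}` and `Δb_{i,j}` is a difference of two bits, hence lies in `{-1, 0, 1}`, and
every column of `Δb` telescopes to `b_{-1,j} - b_{m-1,j} = 1`, so `Σ Δb = n`. Therefore
`E_d - n = Σ e(Δa_{i,j}, Δb_{i,j})` with `e(a, b) = a² + b² - ab - b`; checking the nine cases,
`e ≥ 0` on `{-1, 0, 1}²`, with equality iff `a, b ≥ 0` and `a = 1 → b = 1`. Finally a bit vector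
with guard bits `1` in front and `0` behind is a domain wall iff it is antitone, i.e. iff all its
differences are nonnegative. -/

def guardExt (k : ℕ) (x : ℕ → ℤ) (j : ℕ) : ℤ :=
  if j = 0 then 1 else if j ≤ k then x (j - 1) else 0

def IsDomainWall (k : ℕ) (x : ℕ → ℤ) : Prop :=
  ∃ t ≤ k, ∀ j < k, (j < t → x j = 1) ∧ (t ≤ j → x j = 0)

section DomainWall

variable {k : ℕ} {x : ℕ → ℤ}

theorem guardExt_eq_zero_or_eq_one (hx : ∀ j < k, x j = 0 ∨ x j = 1) (j : ℕ) :
    guardExt k x j = 0 ∨ guardExt k x j = 1 := by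
  unfold guardExt
  split_ifs
  · exact .inr rfl
  · exact hx _ (by omega)
  · exact .inl rfl

theorem abs_guardExt_sub_le_one (hx : ∀ j < k, x j = 0 ∨ x j = 1) (j l : ℕ) :
    |guardExt k x j - guardExt k x l| ≤ 1 := by
  have := guardExt_eq_zero_or_eq_one hx j
  have := guardExt_eq_zero_or_eq_one hx l
  exact abs_le.mpr ⟨by omega, by omega⟩

theorem guardExt_succ {j : ℕ} (hj : j < k) : guardExt k x (j + 1) = x j := by
  simp [guardExt, Nat.succ_le_of_lt hj]

theorem guardExt_succ_le_of_le {N j : ℕ} (hj : N ≤ j) :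
    guardExt (N - 1) x (j + 1) ≤ guardExt (N - 1) x j := by
  simp only [guardExt, Nat.add_one_ne_zero, if_false]
  split_ifs <;> omega

theorem guardExt_eq_ite_le {t : ℕ} (htk : t ≤ k)
    (ht : ∀ j < k, (j < t → x j = 1) ∧ (t ≤ j → x j = 0)) (j : ℕ) :
    guardExt k x j = if j ≤ t then 1 else 0 := by
  unfold guardExt
  split_ifs <;>
    first
    | omega
    | exact (ht _ (by omega)).1 (by omega)
    | exact (ht _ (by omega)).2 (by omega)

theorem isDomainWall_iff_antitone_guardExt (hx : ∀ j < k, x j = 0 ∨ x j = 1) :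
    IsDomainWall k x ↔ Antitone (guardExt k x) := by
  constructor
  · rintro ⟨t, htk, ht⟩ a b hab
    simp only [guardExt_eq_ite_le htk ht]
    split_ifs <;> omega
  · intro hanti
    classical
    have hwall : ∃ t, guardExt k x (t + 1) = 0 := ⟨k, by simp [guardExt]⟩
    refine ⟨Nat.find hwall, Nat.find_min' hwall (by simp [guardExt]),
      fun j hj => ⟨fun hjt => ?_, fun hjt => ?_⟩⟩
    · have hne := Nat.find_min hwall hjt
      rw [guardExt_succ hj] at hne
      exact (hx j hj).resolve_left hne
    · have hle := hanti (Nat.succ_le_succ hjt)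
      rw [Nat.find_spec hwall, guardExt_succ hj] at hle
      have := hx j hj
      omega

theorem isDomainWall_iff_forall_guardExt_succ_le {N : ℕ} (hx : ∀ j < N - 1, x j = 0 ∨ x j = 1) :
    IsDomainWall (N - 1) x ↔ ∀ j < N, guardExt (N - 1) x (j + 1) ≤ guardExt (N - 1) x j := by
  rw [isDomainWall_iff_antitone_guardExt hx]
  refine ⟨fun h j _ => h (Nat.le_succ j), fun h => antitone_nat_of_succ_le fun j => ?_⟩
  rcases lt_or_ge j N with hj | hj
  · exact h j hj
  · exact guardExt_succ_le_of_le hj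

end DomainWall

theorem gA_eq_guardExt (n : ℕ) (A : ℕ → ℕ → ℤ) (i : ℕ) : gA n A i = guardExt (n - 1) (A i) := by
  funext j
  unfold gA guardExt
  split_ifs <;> first | rfl | omega

theorem gB_eq_guardExt (m : ℕ) (B : ℕ → ℕ → ℤ) (i j : ℕ) :
    gB m B i j = guardExt (m - 1) (B · j) i := by
  unfold gB guardExt
  split_ifs <;> first | rfl | omega

theorem rowDW_iff_forall_dA_nonneg {m n : ℕ} {A : ℕ → ℕ → ℤ}
    (hA : ∀ i < m, ∀ j < n - 1, A i j = 0 ∨ A i j = 1) :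
    RowDW m n A ↔ ∀ i < m, ∀ j < n, 0 ≤ dA n A i j := by
  simp only [dA, gA_eq_guardExt, sub_nonneg]
  exact forall₂_congr fun i hi => isDomainWall_iff_forall_guardExt_succ_le (hA i hi)

theorem colDW_iff_forall_dB_nonneg {m n : ℕ} {B : ℕ → ℕ → ℤ}
    (hB : ∀ i < m - 1, ∀ j < n, B i j = 0 ∨ B i j = 1) :
    ColDW m n B ↔ ∀ i < m, ∀ j < n, 0 ≤ dB m B i j := by
  simp only [dB, gB_eq_guardExt, sub_nonneg]
  calc ColDW m n B
    _ ↔ ∀ j < n, ∀ i < m, guardExt (m - 1) (B · j) (i + 1) ≤ guardExt (m - 1) (B · j) i :=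
        forall₂_congr fun j hj => isDomainWall_iff_forall_guardExt_succ_le fun i hi => hB i hi j hj
    _ ↔ _ := ⟨fun h i hi j hj => h j hj i hi, fun h j hj i hi => h i hi j hj⟩

theorem abs_dA_le_one {m n : ℕ} {A : ℕ → ℕ → ℤ}
    (hA : ∀ i < m, ∀ j < n - 1, A i j = 0 ∨ A i j = 1) {i : ℕ} (hi : i < m) (j : ℕ) :
    |dA n A i j| ≤ 1 := by
  rw [dA, gA_eq_guardExt]
  exact abs_guardExt_sub_le_one (hA i hi) _ _

theorem abs_dB_le_one {m n : ℕ} {B : ℕ → ℕ → ℤ}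
    (hB : ∀ i < m - 1, ∀ j < n, B i j = 0 ∨ B i j = 1) (i : ℕ) {j : ℕ} (hj : j < n) :
    |dB m B i j| ≤ 1 := by
  rw [dB, gB_eq_guardExt, gB_eq_guardExt]
  exact abs_guardExt_sub_le_one (fun i hi => hB i hi j hj) _ _

theorem sum_dB_eq_one {m : ℕ} (hm : 1 ≤ m) (B : ℕ → ℕ → ℤ) (j : ℕ) :
    ∑ i ∈ Finset.range m, dB m B i j = 1 :=
  (Finset.sum_range_sub' (gB m B · j) m).trans (by simp [gB, Nat.one_le_iff_ne_zero.mp hm])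

def excess (a b : ℤ) : ℤ := a ^ 2 + b ^ 2 - a * b - b

theorem excess_nonneg {a b : ℤ} (ha : |a| ≤ 1) (hb : |b| ≤ 1) : 0 ≤ excess a b := by
  obtain ⟨ha₁, ha₂⟩ := abs_le.mp ha
  obtain ⟨hb₁, hb₂⟩ := abs_le.mp hb
  interval_cases a <;> interval_cases b <;> decide

theorem excess_eq_zero_iff {a b : ℤ} (ha : |a| ≤ 1) (hb : |b| ≤ 1) :
    excess a b = 0 ↔ 0 ≤ a ∧ 0 ≤ b ∧ (a = 1 → b = 1) := by
  obtain ⟨ha₁, ha₂⟩ := abs_le.mp ha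
  obtain ⟨hb₁, hb₂⟩ := abs_le.mp hb
  interval_cases a <;> interval_cases b <;> decide

theorem Ed_eq_add_sum_excess {m : ℕ} (hm : 1 ≤ m) (n : ℕ) (A B : ℕ → ℕ → ℤ) :
    Ed m n A B = n + ∑ i ∈ Finset.range m, ∑ j ∈ Finset.range n,
      (excess (dA n A i j) (dB m B i j) : ℚ) := by
  have hsum : ∑ i ∈ Finset.range m, ∑ j ∈ Finset.range n, (dB m B i j : ℚ) = n := by
    rw [Finset.sum_comm]
    simp only [← Int.cast_sum, sum_dB_eq_one hm, Int.cast_one, Finset.sum_const, Finset.card_range,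
      nsmul_eq_mul, mul_one]
  rw [Ed, ← hsum]
  simp only [Finset.mul_sum, ← Finset.sum_add_distrib]
  refine Finset.sum_congr rfl fun i _ => Finset.sum_congr rfl fun j _ => ?_
  push_cast [excess]
  ring

theorem excess_dA_dB_nonneg {m n : ℕ} {A B : ℕ → ℕ → ℤ}
    (hA : ∀ i < m, ∀ j < n - 1, A i j = 0 ∨ A i j = 1)
    (hB : ∀ i < m - 1, ∀ j < n, B i j = 0 ∨ B i j = 1) {i j : ℕ} (hi : i < m) (hj : j < n) :
    0 ≤ excess (dA n A i j) (dB m B i j) :=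
  excess_nonneg (abs_dA_le_one hA hi j) (abs_dB_le_one hB i hj)

theorem natCast_le_Ed {m n : ℕ} {A B : ℕ → ℕ → ℤ} (hm : 1 ≤ m)
    (hA : ∀ i < m, ∀ j < n - 1, A i j = 0 ∨ A i j = 1)
    (hB : ∀ i < m - 1, ∀ j < n, B i j = 0 ∨ B i j = 1) :
    (n : ℚ) ≤ Ed m n A B := by
  rw [Ed_eq_add_sum_excess hm]
  refine le_add_of_nonneg_right <| Finset.sum_nonneg fun i hi => Finset.sum_nonneg fun j hj => ?_
  exact Int.cast_nonneg_iff.mpr <|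
    excess_dA_dB_nonneg hA hB (Finset.mem_range.mp hi) (Finset.mem_range.mp hj)

theorem Ed_eq_natCast_iff {m n : ℕ} {A B : ℕ → ℕ → ℤ} (hm : 1 ≤ m)
    (hA : ∀ i < m, ∀ j < n - 1, A i j = 0 ∨ A i j = 1)
    (hB : ∀ i < m - 1, ∀ j < n, B i j = 0 ∨ B i j = 1) :
    Ed m n A B = n ↔
      ∀ i < m, ∀ j < n, 0 ≤ dA n A i j ∧ 0 ≤ dB m B i j ∧ (dA n A i j = 1 → dB m B i j = 1) := by
  have hzero {i j : ℕ} (hi : i < m) (hj : j < n) :=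
    excess_eq_zero_iff (abs_dA_le_one hA hi j) (abs_dB_le_one hB i hj)
  rw [Ed_eq_add_sum_excess hm, add_eq_left, ← Finset.sum_product',
    Finset.sum_eq_zero_iff_of_nonneg]
  · simp only [Finset.mem_product, Finset.mem_range, Int.cast_eq_zero, and_imp, Prod.forall]
    exact ⟨fun h i hi j hj => (hzero hi hj).mp (h i j hi hj),
      fun h i j hi hj => (hzero hi hj).mpr (h i hi j hj)⟩
  · simp only [Finset.mem_product, Finset.mem_range, Int.cast_nonneg_iff, and_imp, Prod.forall]
    exact fun i j hi hj => excess_dA_dB_nonneg hA hB hi hj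

theorem Ed_min_iff_conditions_general (m n : ℕ) (hm : 1 ≤ m)
    (A B : ℕ → ℕ → ℤ)
    (hA : ∀ i < m, ∀ j < n - 1, A i j = 0 ∨ A i j = 1)
    (hB : ∀ i < m - 1, ∀ j < n, B i j = 0 ∨ B i j = 1) :
    (n : ℚ) ≤ Ed m n A B ∧
    (Ed m n A B = n ↔ RowDW m n A ∧ ColDW m n B ∧ DualPerm m n A B) := by
  refine ⟨natCast_le_Ed hm hA hB, ?_⟩
  rw [Ed_eq_natCast_iff hm hA hB, rowDW_iff_forall_dA_nonneg hA, colDW_iff_forall_dB_nonneg hB,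
    DualPerm]
  simp only [imp_and, forall_and]

/-- Theorem 1: `E_dᵐⁿ(A,B) ≥ n`, with equality iff `A` and `B` satisfy the row
domain-wall, column domain-wall, and dual-permutation conditions. -/
theorem Ed_min_iff_conditions (m n : ℕ) (hm : 1 ≤ m) (hmn : m ≤ n)
    (A B : ℕ → ℕ → ℤ)
    (hA : ∀ i < m, ∀ j < n - 1, A i j = 0 ∨ A i j = 1)
    (hB : ∀ i < m - 1, ∀ j < n, B i j = 0 ∨ B i j = 1) :
    (n : ℚ) ≤ Ed m n A B ∧
    (Ed m n A B = n ↔ RowDW m n A ∧ ColDW m n B ∧ DualPerm m n A B) :=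
  Ed_min_iff_conditions_general m n hm A B hA hB
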